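/- Let 0 < ε ≤ 0.1 and let ψ be a unit vector in ℂ^d within distance ε of some b = (1/√d)∑ₖ sₖeₖ with sₖ ∈ {±1}. Then the likelihood L(ψ) from one set of basic observations (measuring each |eₖ⟩⟨eₖ| once and each |(eⱼ±ieₖ)/√2⟩⟨(eⱼ±ieₖ)/√2| once for j<k) satisfies L(ψ) ≥ (1 − 2ε d^{5/2})/d^{d²}. -/

import Mathlib

/-! Each basic observation vector `v` is a unit vector with `|⟨v, b⟩| = 1/√d`, so by
Cauchy–Schwarz `|⟨v, ψ⟩| ≥ 1/√d - ε`, whence `|⟨v, ψ⟩|² ≥ (1 - 2ε√d)/d`. The likelihood is a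
product of `d + d(d-1) = d²` such factors, and Bernoulli's inequality bounds
`(1 - 2ε√d)^(d²)` below by `1 - 2ε d^(5/2)`. -/

open Finset

/-- The likelihood of one set of basic observations: measuring each `|e_k⟩⟨e_k|` once and
each `|(e_j ± i e_k)/√2⟩⟨(e_j ± i e_k)/√2|` once for `j < k`. -/
noncomputable def basicLikelihood {d : ℕ} (ψ : EuclideanSpace ℂ (Fin d)) : ℝ :=
  (∏ k, ‖(inner ℂ (EuclideanSpace.single k (1 : ℂ)) ψ : ℂ)‖ ^ 2) *
  ∏ j, ∏ k ∈ Finset.univ.filter (fun k => j < k),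
    (‖(inner ℂ ((Real.sqrt 2 : ℂ)⁻¹ • (EuclideanSpace.single j (1 : ℂ)
        + Complex.I • EuclideanSpace.single k (1 : ℂ))) ψ : ℂ)‖ ^ 2 *
     ‖(inner ℂ ((Real.sqrt 2 : ℂ)⁻¹ • (EuclideanSpace.single j (1 : ℂ)
        - Complex.I • EuclideanSpace.single k (1 : ℂ))) ψ : ℂ)‖ ^ 2)

open scoped InnerProductSpace ComplexConjugate

theorem norm_inner_sq_sub_two_mul_le_of_norm_sub_le {𝕜 E : Type*} [RCLike 𝕜]
    [NormedAddCommGroup E] [InnerProductSpace 𝕜 E] {v b ψ : E} {ε : ℝ}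
    (hv : ‖v‖ ≤ 1) (hψ : ‖ψ - b‖ ≤ ε) :
    ‖⟪v, b⟫_𝕜‖ ^ 2 - 2 * ε * ‖⟪v, b⟫_𝕜‖ ≤ ‖⟪v, ψ⟫_𝕜‖ ^ 2 := by
  have hdiff : ‖⟪v, b⟫_𝕜‖ - ‖⟪v, ψ⟫_𝕜‖ ≤ ε :=
    calc ‖⟪v, b⟫_𝕜‖ - ‖⟪v, ψ⟫_𝕜‖ ≤ ‖⟪v, b⟫_𝕜 - ⟪v, ψ⟫_𝕜‖ := norm_sub_norm_le _ _
      _ = ‖⟪v, b - ψ⟫_𝕜‖ := by rw [inner_sub_right]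
      _ ≤ ‖v‖ * ‖b - ψ‖ := norm_inner_le_norm v _
      _ ≤ ε := (mul_le_of_le_one_left (norm_nonneg _) hv).trans (norm_sub_rev b ψ ▸ hψ)
  -- `a² - 2εa` is `≤ 0` when `a ≤ ε`, and `≤ (a - ε)²` otherwise.
  rcases le_total ‖⟪v, b⟫_𝕜‖ ε with h | h
  · nlinarith [norm_nonneg ⟪v, b⟫_𝕜]
  · nlinarith [pow_le_pow_left₀ (sub_nonneg.2 h) (by linarith : ‖⟪v, b⟫_𝕜‖ - ε ≤ ‖⟪v, ψ⟫_𝕜‖) 2,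
      sq_nonneg ε]

theorem div_le_norm_inner_sq_of_norm_inner_eq {𝕜 E : Type*} [RCLike 𝕜]
    [NormedAddCommGroup E] [InnerProductSpace 𝕜 E] {v b ψ : E} {ε r : ℝ}
    (hv : ‖v‖ ≤ 1) (hvb : ‖⟪v, b⟫_𝕜‖ = (√r)⁻¹) (hψ : ‖ψ - b‖ ≤ ε) (hr : 0 ≤ r) :
    (1 - 2 * ε * √r) / r ≤ ‖⟪v, ψ⟫_𝕜‖ ^ 2 := by
  calc (1 - 2 * ε * √r) / r = (√r)⁻¹ ^ 2 - 2 * ε * (√r)⁻¹ := by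
        rw [sub_div, mul_div_assoc, Real.sqrt_div_self', inv_pow, Real.sq_sqrt hr, one_div, one_div]
    _ ≤ ‖⟪v, ψ⟫_𝕜‖ ^ 2 := hvb ▸ norm_inner_sq_sub_two_mul_le_of_norm_sub_le hv hψ

theorem sum_card_Ioi_mul_two_add (d : ℕ) : (∑ j : Fin d, #(Ioi j)) * 2 + d = d ^ 2 := by
  simp only [Fin.card_Ioi]
  rw [Fin.sum_univ_eq_sum_range (fun i => d - 1 - i), ← Finset.sum_range_reflect,
    Finset.sum_congr rfl (fun i hi => ?_), Finset.sum_range_id_mul_two]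
  · cases d <;> simp only [zero_tsub, add_tsub_cancel_right] <;> ring
  · simp only [mem_range] at hi; omega

theorem pow_card_le_prod_of_nonneg {ι : Type*} (s : Finset ι) {f : ι → ℝ} {C : ℝ} (hC : 0 ≤ C)
    (h : ∀ i ∈ s, C ≤ f i) : C ^ #s ≤ ∏ i ∈ s, f i :=
  calc C ^ #s = ∏ _i ∈ s, C := (prod_const C).symm
    _ ≤ ∏ i ∈ s, f i := prod_le_prod (fun _ _ => hC) h

section Observations

open EuclideanSpace Complex

variable {d : ℕ}

noncomputable def pairVector (j k : Fin d) (c : ℂ) : EuclideanSpace ℂ (Fin d) :=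
  (√2 : ℂ)⁻¹ • (single j 1 + c • single k 1)

theorem inner_pairVector (j k : Fin d) (c : ℂ) (ψ : EuclideanSpace ℂ (Fin d)) :
    ⟪pairVector j k c, ψ⟫_ℂ = (√2 : ℂ)⁻¹ * (ψ j + conj c * ψ k) := by
  simp only [pairVector, inner_smul_left, inner_add_left, inner_single_left, map_one, one_mul,
    map_inv₀, conj_ofReal]

theorem norm_pairVector {j k : Fin d} (hjk : j ≠ k) {c : ℂ} (hc : ‖c‖ = 1) :
    ‖pairVector j k c‖ = 1 := by
  have horth : ⟪single j (1 : ℂ), c • single k 1⟫_ℂ = 0 := by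
    simp [inner_single_left, hjk.symm]
  have hnorm : ‖single j (1 : ℂ) + c • single k 1‖ = √2 := by
    rw [← Real.sqrt_mul_self (norm_nonneg _),
      norm_add_sq_eq_norm_sq_add_norm_sq_of_inner_eq_zero _ _ horth, norm_smul, hc]
    norm_num
  rw [pairVector, norm_smul, hnorm]
  simp [abs_of_nonneg]

theorem basicLikelihood_nonneg (ψ : EuclideanSpace ℂ (Fin d)) : 0 ≤ basicLikelihood ψ := by
  unfold basicLikelihood
  positivity

theorem basicLikelihood_eq (ψ : EuclideanSpace ℂ (Fin d)) :
    basicLikelihood ψ = (∏ k, ‖⟪single k (1 : ℂ), ψ⟫_ℂ‖ ^ 2) *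
      ∏ j, ∏ k ∈ Ioi j, (‖⟪pairVector j k I, ψ⟫_ℂ‖ ^ 2 * ‖⟪pairVector j k (-I), ψ⟫_ℂ‖ ^ 2) := by
  simp only [basicLikelihood, pairVector, filter_lt_eq_Ioi, sub_eq_add_neg, neg_smul]

theorem pow_sq_le_basicLikelihood {ψ : EuclideanSpace ℂ (Fin d)} {C : ℝ} (hC : 0 ≤ C)
    (hsingle : ∀ k, C ≤ ‖⟪single k (1 : ℂ), ψ⟫_ℂ‖ ^ 2)
    (hpair : ∀ j k c, j ≠ k → (c = I ∨ c = -I) → C ≤ ‖⟪pairVector j k c, ψ⟫_ℂ‖ ^ 2) :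
    C ^ (d ^ 2) ≤ basicLikelihood ψ := by
  rw [basicLikelihood_eq, ← sum_card_Ioi_mul_two_add, add_comm, pow_add, pow_mul',
    ← prod_pow_eq_pow_sum]
  refine mul_le_mul ?_ (prod_le_prod (fun _ _ => by positivity) fun j _ => ?_)
    (by positivity) (by positivity)
  · simpa using pow_card_le_prod_of_nonneg univ hC fun k _ => hsingle k
  · refine pow_card_le_prod_of_nonneg _ (by positivity) fun k hk => ?_
    have hjk : j ≠ k := (mem_Ioi.1 hk).ne
    rw [sq]
    exact mul_le_mul (hpair j k I hjk (.inl rfl)) (hpair j k (-I) hjk (.inr rfl)) hC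
      (by positivity)

variable {s : Fin d → ℝ} {b : EuclideanSpace ℂ (Fin d)}

theorem norm_inner_single_of_sign (hs : ∀ k, s k = 1 ∨ s k = -1)
    (hb : ∀ k, b k = (s k : ℂ) / (√d : ℂ)) (k : Fin d) :
    ‖⟪single k (1 : ℂ), b⟫_ℂ‖ = (√d)⁻¹ := by
  rcases hs k with h | h <;> simp [inner_single_left, hb, h]

theorem norm_inner_pairVector_of_sign (hs : ∀ k, s k = 1 ∨ s k = -1)
    (hb : ∀ k, b k = (s k : ℂ) / (√d : ℂ)) (j k : Fin d) {c : ℂ} (hc : c = I ∨ c = -I) :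
    ‖⟪pairVector j k c, b⟫_ℂ‖ = (√d)⁻¹ := by
  have hsq : ∀ k, s k ^ 2 = 1 := fun k => by rcases hs k with h | h <;> simp [h]
  obtain ⟨t, ht, hct⟩ : ∃ t : ℝ, t ^ 2 = 1 ∧ conj c = t * I := by
    rcases hc with rfl | rfl
    · exact ⟨-1, by norm_num, by simp⟩
    · exact ⟨1, by norm_num, by simp⟩
  have hsum : b j + conj c * b k = (s j + (t * s k : ℝ) * I) / (√d : ℂ) := by
    rw [hb, hb, hct]; push_cast; ring
  rw [inner_pairVector, hsum, norm_mul, norm_div, norm_add_mul_I, mul_pow, ht, hsq, hsq]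
  simp only [norm_inv, norm_real, Real.norm_eq_abs, mul_one, one_add_one_eq_two,
    abs_of_nonneg (Real.sqrt_nonneg _)]
  field_simp

end Observations

theorem one_sub_two_mul_rpow_div_le_div_pow (d : ℕ) {ε : ℝ} (hε : 2 * ε * √d ≤ 2) :
    (1 - 2 * ε * (d : ℝ) ^ ((5 : ℝ) / 2)) / (d : ℝ) ^ (d ^ 2) ≤
      ((1 - 2 * ε * √d) / d) ^ (d ^ 2) := by
  have hrpow : (d : ℝ) ^ ((5 : ℝ) / 2) = (d : ℝ) ^ 2 * √d := by
    rw [Real.sqrt_eq_rpow, ← Real.rpow_natCast, ← Real.rpow_add' (by positivity) (by norm_num)]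
    norm_num
  rw [div_pow]
  refine div_le_div_of_nonneg_right ?_ (by positivity)
  calc 1 - 2 * ε * (d : ℝ) ^ ((5 : ℝ) / 2) = 1 + ((d ^ 2 : ℕ) : ℝ) * -(2 * ε * √d) := by
        rw [hrpow]; push_cast; ring
    _ ≤ (1 + -(2 * ε * √d)) ^ (d ^ 2) := one_add_mul_le_pow (by linarith) _
    _ = (1 - 2 * ε * √d) ^ (d ^ 2) := by rw [← sub_eq_add_neg]

theorem stmt_17_general (d : ℕ) (hd : 2 ≤ d) (ε : ℝ)
    (s : Fin d → ℝ) (hs : ∀ k, s k = 1 ∨ s k = -1)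
    (b : EuclideanSpace ℂ (Fin d))
    (hb : ∀ k, b k = (s k : ℂ) / (Real.sqrt d : ℂ))
    (ψ : EuclideanSpace ℂ (Fin d))
    (hclose : ‖ψ - b‖ ≤ ε) :
    (1 - 2 * ε * (d : ℝ) ^ ((5 : ℝ) / 2)) / (d : ℝ) ^ (d ^ 2) ≤ basicLikelihood ψ := by
  have hε : 0 ≤ ε := (norm_nonneg _).trans hclose
  rcases le_or_gt (1 - 2 * ε * (d : ℝ) ^ ((5 : ℝ) / 2)) 0 with hneg | hpos
  · exact (div_nonpos_of_nonpos_of_nonneg hneg (by positivity)).trans (basicLikelihood_nonneg ψ)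
  have hsqrt : 2 * ε * √d ≤ 1 := by
    have : √d ≤ (d : ℝ) ^ ((5 : ℝ) / 2) := by
      rw [Real.sqrt_eq_rpow]
      exact Real.rpow_le_rpow_of_exponent_le (by norm_cast; omega) (by norm_num)
    nlinarith
  calc _ ≤ ((1 - 2 * ε * √d) / d) ^ (d ^ 2) := one_sub_two_mul_rpow_div_le_div_pow d (by linarith)
    _ ≤ basicLikelihood ψ := by
      refine pow_sq_le_basicLikelihood (div_nonneg (by linarith) d.cast_nonneg) (fun k => ?_)
        fun j k c hjk hc => ?_
      · exact div_le_norm_inner_sq_of_norm_inner_eq (by simp)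
          (norm_inner_single_of_sign hs hb k) hclose d.cast_nonneg
      · have hc1 : ‖c‖ = 1 := by rcases hc with rfl | rfl <;> simp
        exact div_le_norm_inner_sq_of_norm_inner_eq (norm_pairVector hjk hc1).le
          (norm_inner_pairVector_of_sign hs hb j k hc) hclose d.cast_nonneg

theorem stmt_17 (d : ℕ) (hd : 2 ≤ d) (ε : ℝ) (hε0 : 0 < ε) (hε1 : ε ≤ 0.1)
    (s : Fin d → ℝ) (hs : ∀ k, s k = 1 ∨ s k = -1)
    (b : EuclideanSpace ℂ (Fin d))
    (hb : ∀ k, b k = (s k : ℂ) / (Real.sqrt d : ℂ))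
    (ψ : EuclideanSpace ℂ (Fin d)) (hψ : ‖ψ‖ = 1)
    (hclose : ‖ψ - b‖ ≤ ε) :
    (1 - 2 * ε * (d : ℝ) ^ ((5 : ℝ) / 2)) / (d : ℝ) ^ (d ^ 2) ≤ basicLikelihood ψ :=
  stmt_17_general d hd ε s hs b hb ψ hclose
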